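/- Let γ > 0, C > 0 and z ∈ ℝ with either z ≤ 0 or z > √(2γC). Then u = z is the unique global minimizer over ℝ of the function φ(u) = γC·χ(u) + (1/2)(u − z)², where χ(u) = 1 if u > 0 and χ(u) = 0 if u ≤ 0. -/

import Mathlib

/-- The scalar `L_{0/1}` proximal objective
`φ(u) = γC·χ(u) + (1/2)(u − z)²`, where `χ(u) = 1` if `u > 0` and `0` otherwise. -/
noncomputable def scalarProxObj (γ C z u : ℝ) : ℝ :=
  γ * C * (if 0 < u then (1 : ℝ) else 0) + (1 / 2) * (u - z) ^ 2

/-! On each side of `0` the objective is a parabola centred at `z`, shifted up by `γC` on `u > 0`.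
When `z ≤ 0`, `z` is the vertex of the lower branch. When `z > √(2γC)`, `z` is the vertex of the
upper branch, with value `γC`, while the lower branch stays above `z² / 2 > γC` on `u ≤ 0`. -/

theorem forall_le_and_eq_of_forall_ne_lt {α β : Type*} [Preorder β] {f : α → β} {a : α}
    (h : ∀ u, u ≠ a → f a < f u) :
    (∀ u, f a ≤ f u) ∧ ∀ u, (∀ v, f u ≤ f v) → u = a := by
  refine ⟨fun u => ?_, fun u hu => ?_⟩
  · rcases eq_or_ne u a with rfl | hne
    · exact le_rfl
    · exact (h u hne).le
  · by_contra hne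
    exact lt_irrefl _ ((h u hne).trans_le (hu a))

namespace scalarProxObj

variable {γ C z u : ℝ}

theorem of_nonpos (hu : u ≤ 0) : scalarProxObj γ C z u = (u - z) ^ 2 / 2 := by
  simp only [scalarProxObj, if_neg hu.not_gt]
  ring

theorem of_pos (hu : 0 < u) : scalarProxObj γ C z u = γ * C + (u - z) ^ 2 / 2 := by
  simp only [scalarProxObj, if_pos hu]
  ring

theorem self_lt_of_nonpos (hγC : 0 ≤ γ * C) (hz : z ≤ 0) (hu : u ≠ z) :
    scalarProxObj γ C z z < scalarProxObj γ C z u := by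
  have hsq : 0 < (u - z) ^ 2 := sq_pos_of_ne_zero (sub_ne_zero.mpr hu)
  rw [of_nonpos hz]
  rcases le_or_gt u 0 with hu₀ | hu₀
  · rw [of_nonpos hu₀]
    linarith
  · rw [of_pos hu₀]
    linarith

theorem self_lt_of_sqrt_lt (hz : Real.sqrt (2 * γ * C) < z) (hu : u ≠ z) :
    scalarProxObj γ C z z < scalarProxObj γ C z u := by
  have hz₀ : 0 < z := (Real.sqrt_nonneg _).trans_lt hz
  have hz_sq : 2 * γ * C < z ^ 2 := Real.lt_sq_of_sqrt_lt hz
  rw [of_pos hz₀]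
  rcases le_or_gt u 0 with hu₀ | hu₀
  · rw [of_nonpos hu₀]
    nlinarith
  · have hsq : 0 < (u - z) ^ 2 := sq_pos_of_ne_zero (sub_ne_zero.mpr hu)
    rw [of_pos hu₀]
    linarith

end scalarProxObj

/-- for `z ≤ 0` or `z > √(2γC)`, `u = z` is the unique global
minimizer of the scalar `L_{0/1}` proximal objective. -/
theorem scalarProx_identity_min (γ C z : ℝ) (hγ : 0 < γ) (hC : 0 < C)
    (hz : z ≤ 0 ∨ Real.sqrt (2 * γ * C) < z) :
    (∀ u : ℝ, scalarProxObj γ C z z ≤ scalarProxObj γ C z u) ∧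
    (∀ u : ℝ, (∀ v : ℝ, scalarProxObj γ C z u ≤ scalarProxObj γ C z v) → u = z) :=
  forall_le_and_eq_of_forall_ne_lt fun _ hu => hz.elim
    (fun hz => scalarProxObj.self_lt_of_nonpos (mul_pos hγ hC).le hz hu)
    (fun hz => scalarProxObj.self_lt_of_sqrt_lt hz hu)
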